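/- Let $\mathfrak{b}=\mathfrak{b}_1\mathfrak{b}_2$ be a factorisation of a non-zero integral ideal of $\mathfrak{o}$ into integral ideals with $\gcd(\mathrm{N}\mathfrak{b}_1,\mathrm{N}\mathfrak{b}_2)=1$. Then for any $N\in\mathfrak{o}$ and any $\mathbf{m}\in\widehat{{}^{G}\mathfrak{b}}^n$, the exponential sum satisfies the twisted multiplicativity relation $S_\mathfrak{b}(N;\mathbf{m})=S_{\mathfrak{b}_1}(\overline{\mathrm{N}\mathfrak{b}_2}^{\,2}N;(\mathrm{N}\mathfrak{b}_2)\mathbf{m})\,S_{\mathfrak{b}_2}(\overline{\mathrm{N}\mathfrak{b}_1}^{\,2}N;(\mathrm{N}\mathfrak{b}_1)\mathbf{m})$, where $\overline{\mathrm{N}\mathfrak{b}_2}$ denotes a multiplicative inverse of $\mathrm{N}\mathfrak{b}_2$ modulo $\mathfrak{b}_1$ and vice versa. -/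

import Mathlib

/-!
By the Chinese remainder theorem, `(ρ₁, ρ₂) ↦ ρ₁ ρ₂` matches pairs of primitive characters
modulo `𝔟₁` and `𝔟₂` with primitive characters modulo `𝔟 = 𝔟₁ 𝔟₂`, and so does its
composite with the twists `ρ₁ ↦ ρ₁(N̄𝔟₂² ·)`, `ρ₂ ↦ ρ₂(N̄𝔟₁² ·)`. Since `N𝔟ᵢ ∈ ᴳ𝔟ᵢ` and
`gcd(N𝔟₁, N𝔟₂) = 1`, the map `(a₁, a₂) ↦ N𝔟₂ a₁ + N𝔟₁ a₂` likewise matches residues modulo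
`ᴳ𝔟₁` and `ᴳ𝔟₂` with residues modulo `ᴳ𝔟`. Finally `F(N𝔟₂ a₁ + N𝔟₁ a₂) ≡ N𝔟₂² F(a₁)`
modulo `𝔟₁` (and symmetrically modulo `𝔟₂`), which the twist cancels, while `ψ` is additive;
so each summand of `S_𝔟` splits into a summand of `S_{𝔟₁}` times one of `S_{𝔟₂}`.
-/

open NumberField
open scoped BigOperators

/-- The action of `Gal(K/ℚ)` on the ring of integers of `K`. -/
noncomputable def gact (K : Type*) [Field K] [NumberField K]
    (τ : K ≃ₐ[ℚ] K) : (𝓞 K) ≃ₐ[ℤ] (𝓞 K) :=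
  galRestrict ℤ ℚ K (𝓞 K) τ

/-- The generalised quadratic form attached to a symmetric coefficient tuple
`c : Fin n → Fin n → Gal(K/ℚ) → Gal(K/ℚ) → 𝓞 K`. -/
noncomputable def gqf {K : Type*} [Field K] [NumberField K] {n : ℕ}
    (c : Fin n → Fin n → (K ≃ₐ[ℚ] K) → (K ≃ₐ[ℚ] K) → 𝓞 K)
    (x : Fin n → 𝓞 K) : 𝓞 K :=
  ∑ i, ∑ j, ∑ τ : K ≃ₐ[ℚ] K, ∑ τ' : K ≃ₐ[ℚ] K,
    c i j τ τ' * gact K τ (x i) * gact K τ' (x j)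

/-- The generalised bilinear form attached to `c`. -/
noncomputable def gbf {K : Type*} [Field K] [NumberField K] {n : ℕ}
    (c : Fin n → Fin n → (K ≃ₐ[ℚ] K) → (K ≃ₐ[ℚ] K) → 𝓞 K)
    (x y : Fin n → 𝓞 K) : 𝓞 K :=
  ∑ i, ∑ j, ∑ τ : K ≃ₐ[ℚ] K, ∑ τ' : K ≃ₐ[ℚ] K,
    c i j τ τ' * gact K τ (x i) * gact K τ' (y j)

/-- The `G`-invariant ideal `ᴳ𝔟 = ⋂_{τ ∈ G} 𝔟^{τ⁻¹}`. -/
noncomputable def GIdeal {K : Type*} [Field K] [NumberField K]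
    (G : Set (K ≃ₐ[ℚ] K)) (𝔟 : Ideal (𝓞 K)) : Ideal (𝓞 K) :=
  ⨅ τ ∈ G, Ideal.map (gact K τ.symm) 𝔟

lemma gbf_add_right {K : Type*} [Field K] [NumberField K] {n : ℕ}
    (c : Fin n → Fin n → (K ≃ₐ[ℚ] K) → (K ≃ₐ[ℚ] K) → 𝓞 K)
    (a x y : Fin n → 𝓞 K) : gbf c a (x + y) = gbf c a x + gbf c a y := by
  simp [gbf, Pi.add_apply, map_add, mul_add, Finset.sum_add_distrib]

lemma gbf_neg_right {K : Type*} [Field K] [NumberField K] {n : ℕ}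
    (c : Fin n → Fin n → (K ≃ₐ[ℚ] K) → (K ≃ₐ[ℚ] K) → 𝓞 K)
    (a x : Fin n → 𝓞 K) : gbf c a (-x) = - gbf c a x := by
  simp [gbf, Pi.neg_apply, map_neg, mul_neg, Finset.sum_neg_distrib]

/-- The subgroup `ℋ_𝔟 = {h ∈ 𝓞ⁿ : 2 B(a; h) ∈ 𝔟 ∀ a}`. -/
noncomputable def Hsub {K : Type*} [Field K] [NumberField K] {n : ℕ}
    (c : Fin n → Fin n → (K ≃ₐ[ℚ] K) → (K ≃ₐ[ℚ] K) → 𝓞 K)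
    (𝔟 : Ideal (𝓞 K)) : AddSubgroup (Fin n → 𝓞 K) where
  carrier := {h | ∀ a, 2 * gbf c a h ∈ 𝔟}
  zero_mem' := by
    intro a
    have : gbf c a (0 : Fin n → 𝓞 K) = 0 := by
      simp [gbf]
    simp [this]
  add_mem' := by
    intro x y hx hy a
    rw [gbf_add_right, mul_add]
    exact Ideal.add_mem _ (hx a) (hy a)
  neg_mem' := by
    intro x hx a
    rw [gbf_neg_right, mul_neg]
    exact (Ideal.neg_mem_iff _).mpr (hx a)

/-- The subgroup `(ᴳ𝔟)ⁿ ⊆ 𝓞ⁿ`. -/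
noncomputable def GIdealPow {K : Type*} [Field K] [NumberField K] (n : ℕ)
    (G : Set (K ≃ₐ[ℚ] K)) (𝔟 : Ideal (𝓞 K)) : AddSubgroup (Fin n → 𝓞 K) :=
  AddSubgroup.pi Set.univ fun _ => (GIdeal G 𝔟).toAddSubgroup

/-- `ψ(x) = exp(2πi Tr_{K/ℚ}(x))`. -/
noncomputable def psiK (K : Type*) [Field K] [NumberField K] (x : K) : ℂ :=
  Complex.exp (2 * Real.pi * Complex.I * ((Algebra.trace ℚ K x : ℚ) : ℂ))

/-- `σ : 𝓞 K → ℂ` is invariant under translation by the ideal `𝔟`. -/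
def IsCharModI {K : Type*} [Field K] [NumberField K] (𝔟 : Ideal (𝓞 K))
    (σ : 𝓞 K → ℂ) : Prop :=
  ∀ x z : 𝓞 K, z ∈ 𝔟 → σ (x + z) = σ x

/-- The set of primitive additive characters modulo `𝔟`. -/
def PrimChars (K : Type*) [Field K] [NumberField K] (𝔟 : Ideal (𝓞 K)) :
    Set (𝓞 K → ℂ) :=
  {σ | (σ 0 = 1 ∧ ∀ x y, σ (x + y) = σ x * σ y) ∧ IsCharModI 𝔟 σ ∧
    ∀ 𝔟₁ : Ideal (𝓞 K), 𝔟₁ ∣ 𝔟 → 𝔟₁ ≠ 𝔟 → ¬ IsCharModI 𝔟₁ σ}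

/-- The exponential sum
`S_𝔟(N; m) = ∑*_{σ mod 𝔟} ∑_{a mod ᴳ𝔟} σ(F(a) - N) ψ(m.a)`,
where `R` is a complete set of representatives modulo `(ᴳ𝔟)ⁿ`. -/
noncomputable def expSum {K : Type*} [Field K] [NumberField K] {n : ℕ}
    (c : Fin n → Fin n → (K ≃ₐ[ℚ] K) → (K ≃ₐ[ℚ] K) → 𝓞 K)
    (𝔟 : Ideal (𝓞 K)) (R : Finset (Fin n → 𝓞 K)) (N : 𝓞 K)
    (m : Fin n → K) : ℂ :=
  ∑ᶠ σ ∈ PrimChars K 𝔟, ∑ a ∈ R,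
    σ (gqf c a - N) * psiK K (∑ i, m i * ((a i : K)))

theorem finsum_mem_mul_finsum_mem {α β R : Type*} [NonUnitalNonAssocSemiring R]
    [NoZeroDivisors R] (s : Set α) (t : Set β) (f : α → R) (g : β → R) :
    (∑ᶠ a ∈ s, f a) * (∑ᶠ b ∈ t, g b) = ∑ᶠ p ∈ s ×ˢ t, f p.1 * g p.2 := by
  classical
  have hsupp : s ×ˢ t ∩ Function.support (fun p : α × β => f p.1 * g p.2) =
      (s ∩ Function.support f) ×ˢ (t ∩ Function.support g) := by
    ext p
    simp only [Set.mem_inter_iff, Set.mem_prod, Function.mem_support, ne_eq, mul_eq_zero, not_or]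
    tauto
  rcases (s ∩ Function.support f).eq_empty_or_nonempty with hS | hS
  · rw [← finsum_mem_inter_support f, hS,
      ← finsum_mem_inter_support (fun p : α × β => f p.1 * g p.2), hsupp, hS]
    simp
  rcases (t ∩ Function.support g).eq_empty_or_nonempty with hT | hT
  · rw [← finsum_mem_inter_support g, hT,
      ← finsum_mem_inter_support (fun p : α × β => f p.1 * g p.2), hsupp, hT]
    simp
  by_cases hfin : (s ∩ Function.support f).Finite ∧ (t ∩ Function.support g).Finite
  · rw [finsum_mem_eq_sum f hfin.1, finsum_mem_eq_sum g hfin.2, Finset.sum_mul_sum,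
      ← Finset.sum_product']
    refine (finsum_mem_eq_sum_of_inter_support_eq (fun p : α × β => f p.1 * g p.2) ?_).symm
    rw [Finset.coe_product, hfin.1.coe_toFinset, hfin.2.coe_toFinset, ← hsupp, Set.inter_assoc,
      Set.inter_self]
  · have hST : ((s ∩ Function.support f) ×ˢ (t ∩ Function.support g)).Infinite :=
      Set.infinite_prod.2 (by tauto)
    rw [finsum_mem_eq_zero_of_infinite (s := s ×ˢ t) (by rwa [hsupp])]
    rcases not_and_or.1 hfin with hS' | hT'
    · rw [finsum_mem_eq_zero_of_infinite hS', zero_mul]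
    · rw [finsum_mem_eq_zero_of_infinite hT', mul_zero]

theorem sq_mul_sq_sub_one_mem {A : Type*} [CommRing A] {I : Ideal A} {x y : A}
    (h : x * y - 1 ∈ I) : y ^ 2 * x ^ 2 - 1 ∈ I := by
  rw [show y ^ 2 * x ^ 2 - 1 = (x * y - 1) * (x * y + 1) by ring]
  exact I.mul_mem_right _ h

def IsTransversal {A ι : Type*} [CommRing A] (L : Ideal A) (R : Finset (ι → A)) : Prop :=
  ∀ x : ι → A, ∃! r, r ∈ R ∧ ∀ i, x i - r i ∈ L

namespace IsTransversal

variable {A ι : Type*} [CommRing A] {L I J : Ideal A} {R R₁ R₂ : Finset (ι → A)}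

theorem eq_of_sub_mem (hR : IsTransversal L R) {r r' : ι → A} (hr : r ∈ R) (hr' : r' ∈ R)
    (h : ∀ i, r i - r' i ∈ L) : r = r' :=
  (hR r).unique ⟨hr, fun i => by simp⟩ ⟨hr', h⟩

theorem sum_eq_sum_product {M : Type*} [AddCommMonoid M] (hR : IsTransversal L R)
    (hR₁ : IsTransversal I R₁) (hR₂ : IsTransversal J R₂) (hLI : L ≤ I) (hLJ : L ≤ J)
    (hIJ : I * J ≤ L) {q₁ q₂ : A} (hq₁ : q₁ ∈ I) (hq₂ : q₂ ∈ J) (hq : IsCoprime q₁ q₂)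
    (f : (ι → A) → M) (hf : ∀ x y, (∀ i, x i - y i ∈ L) → f x = f y) :
    ∑ a ∈ R, f a = ∑ p ∈ R₁ ×ˢ R₂, f (q₂ • p.1 + q₁ • p.2) := by
  obtain ⟨u, v, huv⟩ := hq
  choose r hrR hr using fun x => (hR x).exists
  choose r₁ hr₁R hr₁ using fun x => (hR₁ x).exists
  choose r₂ hr₂R hr₂ using fun x => (hR₂ x).exists
  symm
  refine Finset.sum_nbij' (fun p => r (q₂ • p.1 + q₁ • p.2)) (fun a => (r₁ (v • a), r₂ (u • a)))
    (fun _ _ => hrR _) (fun _ _ => Finset.mem_product.2 ⟨hr₁R _, hr₂R _⟩) ?_ ?_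
    (fun p _ => hf _ _ (hr _))
  · rintro ⟨p₁, p₂⟩ hp
    obtain ⟨hp₁, hp₂⟩ := Finset.mem_product.1 hp
    set a := r (q₂ • p₁ + q₁ • p₂)
    have ha : ∀ i, q₂ * p₁ i + q₁ * p₂ i - a i ∈ L := by simpa using hr (q₂ • p₁ + q₁ • p₂)
    refine Prod.ext (hR₁.eq_of_sub_mem (hr₁R _) hp₁ fun i => ?_)
      (hR₂.eq_of_sub_mem (hr₂R _) hp₂ fun i => ?_)
    · rw [show r₁ (v • a) i - p₁ i = -(v * a i - r₁ (v • a) i)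
          - v * (q₂ * p₁ i + q₁ * p₂ i - a i) + q₁ * (v * p₂ i - u * p₁ i) by
        linear_combination p₁ i * huv]
      exact add_mem (sub_mem (neg_mem (hr₁ (v • a) i)) (I.mul_mem_left _ (hLI (ha i))))
        (I.mul_mem_right _ hq₁)
    · rw [show r₂ (u • a) i - p₂ i = -(u * a i - r₂ (u • a) i)
          - u * (q₂ * p₁ i + q₁ * p₂ i - a i) + q₂ * (u * p₁ i - v * p₂ i) by
        linear_combination p₂ i * huv]
      exact add_mem (sub_mem (neg_mem (hr₂ (u • a) i)) (J.mul_mem_left _ (hLJ (ha i))))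
        (J.mul_mem_right _ hq₂)
  · intro a ha
    refine hR.eq_of_sub_mem (hrR _) ha fun i => ?_
    set b := q₂ • r₁ (v • a) + q₁ • r₂ (u • a)
    rw [show r b i - a i = -(b i - r b i) - q₂ * (v * a i - r₁ (v • a) i)
        - q₁ * (u * a i - r₂ (u • a) i) by
      simp only [b, Pi.add_apply, Pi.smul_apply, smul_eq_mul]; linear_combination a i * huv]
    refine sub_mem (sub_mem (neg_mem (hr b i)) (hIJ ?_)) (hIJ ?_)
    · rw [mul_comm q₂]; exact Ideal.mul_mem_mul (hr₁ (v • a) i) hq₂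
    · exact Ideal.mul_mem_mul hq₁ (hr₂ (u • a) i)

end IsTransversal

section GaloisIdeal

variable {K : Type*} [Field K] [NumberField K] {G : Set (K ≃ₐ[ℚ] K)}

theorem gact_symm (τ : K ≃ₐ[ℚ] K) : gact K τ.symm = (gact K τ).symm :=
  map_inv (galRestrict ℤ ℚ K (𝓞 K)) τ

theorem mem_GIdeal_iff {𝔟 : Ideal (𝓞 K)} {z : 𝓞 K} :
    z ∈ GIdeal G 𝔟 ↔ ∀ τ ∈ G, gact K τ z ∈ 𝔟 := by
  simp only [GIdeal, Submodule.mem_iInf, Ideal.mem_map_of_equiv, gact_symm]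
  refine forall₂_congr fun τ _ => ⟨?_, fun h => ⟨_, h, by simp⟩⟩
  rintro ⟨x, hx, rfl⟩
  simpa using hx

theorem natCast_mem_GIdeal {𝔟 : Ideal (𝓞 K)} {k : ℕ} (hk : (k : 𝓞 K) ∈ 𝔟) :
    (k : 𝓞 K) ∈ GIdeal G 𝔟 :=
  mem_GIdeal_iff.2 fun τ _ => by rwa [map_natCast]

theorem GIdeal_mono {I J : Ideal (𝓞 K)} (h : I ≤ J) : GIdeal G I ≤ GIdeal G J :=
  fun _ hz => mem_GIdeal_iff.2 fun τ hτ => h (mem_GIdeal_iff.1 hz τ hτ)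

theorem GIdeal_mul_le (I J : Ideal (𝓞 K)) : GIdeal G I * GIdeal G J ≤ GIdeal G (I * J) :=
  Ideal.mul_le.2 fun _ hz _ hw => mem_GIdeal_iff.2 fun τ hτ => by
    rw [map_mul]
    exact Ideal.mul_mem_mul (mem_GIdeal_iff.1 hz τ hτ) (mem_GIdeal_iff.1 hw τ hτ)

end GaloisIdeal

section QuadraticForm

variable {K : Type*} [Field K] [NumberField K] {n : ℕ}
  {c : Fin n → Fin n → (K ≃ₐ[ℚ] K) → (K ≃ₐ[ℚ] K) → 𝓞 K}

theorem gqf_sub_gqf_mem {G : Set (K ≃ₐ[ℚ] K)}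
    (hG : ∀ i j τ τ', c i j τ τ' ≠ 0 → τ ∈ G ∧ τ' ∈ G) {𝔟 : Ideal (𝓞 K)} {x y : Fin n → 𝓞 K}
    (h : ∀ i, x i - y i ∈ GIdeal G 𝔟) :
    gqf c x - gqf c y ∈ 𝔟 := by
  rw [← Ideal.Quotient.eq]
  simp only [gqf, map_sum, map_mul]
  refine Finset.sum_congr rfl fun i _ => Finset.sum_congr rfl fun j _ =>
    Finset.sum_congr rfl fun τ _ => Finset.sum_congr rfl fun τ' _ => ?_
  by_cases hc : c i j τ τ' = 0
  · simp [hc]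
  obtain ⟨hτ, hτ'⟩ := hG i j τ τ' hc
  have hxy : ∀ k, ∀ σ ∈ G, Ideal.Quotient.mk 𝔟 (gact K σ (x k)) =
      Ideal.Quotient.mk 𝔟 (gact K σ (y k)) := fun k σ hσ => by
    rw [Ideal.Quotient.eq, ← map_sub]
    exact mem_GIdeal_iff.1 (h k) σ hσ
  rw [hxy i τ hτ, hxy j τ' hτ']

theorem gqf_smul_add_smul_sub_mem (p : ℕ) {q : ℕ} {J : Ideal (𝓞 K)} (hq : (q : 𝓞 K) ∈ J)
    (x y : Fin n → 𝓞 K) :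
    gqf c ((p : 𝓞 K) • x + (q : 𝓞 K) • y) - (p : 𝓞 K) ^ 2 * gqf c x ∈ J := by
  have hq0 : (q : 𝓞 K ⧸ J) = 0 := by
    rw [← map_natCast (Ideal.Quotient.mk J), Ideal.Quotient.eq_zero_iff_mem]
    exact hq
  rw [← Ideal.Quotient.eq]
  simp only [gqf, map_sum, map_mul, Finset.mul_sum, Pi.add_apply, Pi.smul_apply, smul_eq_mul,
    map_add, map_natCast, hq0, zero_mul, add_zero, map_pow]
  refine Finset.sum_congr rfl fun i _ => Finset.sum_congr rfl fun j _ =>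
    Finset.sum_congr rfl fun τ _ => Finset.sum_congr rfl fun τ' _ => by ring

end QuadraticForm

section Characters

variable {K : Type*} [Field K] [NumberField K] {𝔟 𝔟₁ 𝔟₂ : Ideal (𝓞 K)} {σ ρ₁ ρ₂ : 𝓞 K → ℂ}

theorem IsCharModI.eq_of_sub_mem (hσ : IsCharModI 𝔟 σ) {x y : 𝓞 K} (h : x - y ∈ 𝔟) :
    σ x = σ y := by
  simpa using hσ y (x - y) h

theorem IsCharModI.apply_mul_mul (hσ : IsCharModI 𝔟 σ) {w z : 𝓞 K} (hwz : w * z - 1 ∈ 𝔟)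
    (x : 𝓞 K) : σ (w * (z * x)) = σ x :=
  hσ.eq_of_sub_mem <| by
    rw [show w * (z * x) - x = (w * z - 1) * x by ring]
    exact 𝔟.mul_mem_right x hwz

theorem IsCharModI.apply_mul_mul_apply_mul (hρ₁ : IsCharModI 𝔟₁ ρ₁) (hρ₂ : IsCharModI 𝔟₂ ρ₂)
    (hρ₂0 : ρ₂ 0 = 1) {e : 𝓞 K} (he₂ : e ∈ 𝔟₂) (he₁ : e - 1 ∈ 𝔟₁) (x : 𝓞 K) :
    ρ₁ (e * x) * ρ₂ (e * x) = ρ₁ x := by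
  have h₁ : e * x - x ∈ 𝔟₁ := by rw [← sub_one_mul]; exact 𝔟₁.mul_mem_right x he₁
  have h₂ : e * x - 0 ∈ 𝔟₂ := by rw [sub_zero]; exact 𝔟₂.mul_mem_right x he₂
  rw [hρ₁.eq_of_sub_mem h₁, hρ₂.eq_of_sub_mem h₂, hρ₂0, mul_one]

theorem mem_primChars_iff : σ ∈ PrimChars K 𝔟 ↔ (σ 0 = 1 ∧ ∀ x y, σ (x + y) = σ x * σ y) ∧
    IsCharModI 𝔟 σ ∧ ∀ 𝔠 : Ideal (𝓞 K), IsCharModI 𝔠 σ → 𝔠 ≤ 𝔟 := by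
  refine and_congr_right fun _ => and_congr_right fun hσ => ⟨fun hprim 𝔠 h𝔠 => ?_,
    fun hle 𝔠 hdvd hne h𝔠 => hne (le_antisymm (hle 𝔠 h𝔠) (Ideal.le_of_dvd hdvd))⟩
  have hsup : IsCharModI (𝔠 ⊔ 𝔟) σ := by
    intro x z hz
    obtain ⟨w, hw, v, hv, rfl⟩ := Submodule.mem_sup.1 hz
    rw [← add_assoc, hσ _ v hv, h𝔠 x w hw]
  by_contra hle
  exact hprim _ (Ideal.dvd_iff_le.2 le_sup_right) (fun h => hle (h ▸ le_sup_left)) hsup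

theorem mul_left_mem_primChars {w z : 𝓞 K} (hwz : w * z - 1 ∈ 𝔟) (hσ : σ ∈ PrimChars K 𝔟) :
    (fun x => σ (w * x)) ∈ PrimChars K 𝔟 := by
  obtain ⟨⟨h0, hadd⟩, hper, hmin⟩ := mem_primChars_iff.1 hσ
  refine mem_primChars_iff.2 ⟨⟨by simpa using h0, fun x y => by simp only [mul_add, hadd]⟩,
    fun x y hy => by simp only [mul_add]; exact hper _ _ (𝔟.mul_mem_left w hy),
    fun 𝔠 h𝔠 => hmin 𝔠 fun x y hy => ?_⟩
  rw [← hper.apply_mul_mul hwz (x + y), ← hper.apply_mul_mul hwz x, mul_add]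
  exact h𝔠 (z * x) (z * y) (𝔠.mul_mem_left z hy)

theorem bijOn_mul_left_primChars {w z : 𝓞 K} (hwz : w * z - 1 ∈ 𝔟) :
    Set.BijOn (fun σ x => σ (w * x)) (PrimChars K 𝔟) (PrimChars K 𝔟) := by
  have hzw : z * w - 1 ∈ 𝔟 := by rwa [mul_comm]
  refine Set.InvOn.bijOn (f' := fun σ x => σ (z * x))
    ⟨fun σ hσ => funext (hσ.2.1.apply_mul_mul hwz),
      fun σ hσ => funext (hσ.2.1.apply_mul_mul hzw)⟩
    (fun _ => mul_left_mem_primChars hwz) (fun _ => mul_left_mem_primChars hzw)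

theorem mul_left_mem_primChars_of_mul (h₂ : 𝔟₂ ≠ ⊥) {e : 𝓞 K} (he₂ : e ∈ 𝔟₂)
    (he₁ : e - 1 ∈ 𝔟₁) (hσ : σ ∈ PrimChars K (𝔟₁ * 𝔟₂)) :
    (fun x => σ (e * x)) ∈ PrimChars K 𝔟₁ := by
  obtain ⟨⟨h0, hadd⟩, hper, hmin⟩ := mem_primChars_iff.1 hσ
  refine mem_primChars_iff.2 ⟨⟨by simpa using h0, fun x y => by simp only [mul_add, hadd]⟩,
    fun x y hy => by
      simp only [mul_add]
      exact hper _ _ (by rw [mul_comm e y]; exact Ideal.mul_mem_mul hy he₂),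
    fun 𝔠 h𝔠 => ?_⟩
  -- a period `y ∈ 𝔠 𝔟₂` of `σ` splits as `e y`, killed by `σ (e ·)`, plus `(1 - e) y ∈ 𝔟₁ 𝔟₂`
  have hper' : IsCharModI (𝔠 * 𝔟₂) σ := fun x y hy => by
    have hey : σ (e * y) = 1 := by simpa [h0] using h𝔠 0 y (Ideal.mul_le_left hy)
    have hey' : σ ((1 - e) * y) = 1 := by
      rw [← h0, hper.eq_of_sub_mem]
      rw [sub_zero, show (1 - e) * y = -((e - 1) * y) by ring]
      exact neg_mem (Ideal.mul_mem_mul he₁ (Ideal.mul_le_right hy))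
    rw [show x + y = x + (e * y + (1 - e) * y) by ring, hadd, hadd, hey, hey', mul_one, mul_one]
  have hle := Ideal.dvd_iff_le.2 (hmin _ hper')
  exact Ideal.le_of_dvd ((mul_dvd_mul_iff_right h₂).1 hle)

theorem mul_mem_primChars (h : IsCoprime 𝔟₁ 𝔟₂) (hρ₁ : ρ₁ ∈ PrimChars K 𝔟₁)
    (hρ₂ : ρ₂ ∈ PrimChars K 𝔟₂) : (fun x => ρ₁ x * ρ₂ x) ∈ PrimChars K (𝔟₁ * 𝔟₂) := by
  obtain ⟨e₂, he₂, e₁, he₁, he⟩ := Ideal.isCoprime_iff_exists.1 h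
  have he₁' : e₁ - 1 ∈ 𝔟₁ := by rw [← he]; simpa using he₂
  have he₂' : e₂ - 1 ∈ 𝔟₂ := by rw [← he]; simpa using he₁
  obtain ⟨⟨h₁0, h₁add⟩, h₁per, h₁min⟩ := mem_primChars_iff.1 hρ₁
  obtain ⟨⟨h₂0, h₂add⟩, h₂per, h₂min⟩ := mem_primChars_iff.1 hρ₂
  refine mem_primChars_iff.2 ⟨⟨by simp [h₁0, h₂0], fun x y => by rw [h₁add, h₂add]; ring⟩,
    fun x y hy => by
      simp only [h₁per x y (Ideal.mul_le_left hy), h₂per x y (Ideal.mul_le_right hy)],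
    fun 𝔠 h𝔠 => ?_⟩
  rw [Ideal.mul_eq_inf_of_isCoprime h]
  refine le_inf (h₁min 𝔠 fun x y hy => ?_) (h₂min 𝔠 fun x y hy => ?_)
  · rw [← h₁per.apply_mul_mul_apply_mul h₂per h₂0 he₁ he₁' (x + y),
      ← h₁per.apply_mul_mul_apply_mul h₂per h₂0 he₁ he₁' x, mul_add]
    exact h𝔠 _ _ (𝔠.mul_mem_left e₁ hy)
  · rw [← h₂per.apply_mul_mul_apply_mul h₁per h₁0 he₂ he₂' (x + y),
      ← h₂per.apply_mul_mul_apply_mul h₁per h₁0 he₂ he₂' x, mul_add]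
    simpa only [mul_comm (ρ₂ _)] using h𝔠 _ _ (𝔠.mul_mem_left e₂ hy)

theorem bijOn_mul_primChars (h : IsCoprime 𝔟₁ 𝔟₂) (hb : 𝔟₁ * 𝔟₂ ≠ ⊥) :
    Set.BijOn (fun p : (𝓞 K → ℂ) × (𝓞 K → ℂ) => fun x => p.1 x * p.2 x)
      (PrimChars K 𝔟₁ ×ˢ PrimChars K 𝔟₂) (PrimChars K (𝔟₁ * 𝔟₂)) := by
  obtain ⟨e₂, he₂, e₁, he₁, he⟩ := Ideal.isCoprime_iff_exists.1 h
  have he₁' : e₁ - 1 ∈ 𝔟₁ := by rw [← he]; simpa using he₂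
  have he₂' : e₂ - 1 ∈ 𝔟₂ := by rw [← he]; simpa using he₁
  obtain ⟨h₁, h₂⟩ : 𝔟₁ ≠ ⊥ ∧ 𝔟₂ ≠ ⊥ := by simpa only [Ne, Ideal.mul_eq_bot, not_or] using hb
  refine Set.InvOn.bijOn (f' := fun σ => (fun x => σ (e₁ * x), fun x => σ (e₂ * x))) ⟨?_, ?_⟩
    (fun p hp => mul_mem_primChars h hp.1 hp.2) fun σ hσ =>
      ⟨mul_left_mem_primChars_of_mul h₂ he₁ he₁' hσ,
        mul_left_mem_primChars_of_mul h₁ he₂ he₂' (mul_comm 𝔟₁ 𝔟₂ ▸ hσ)⟩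
  · rintro ⟨ρ₁, ρ₂⟩ ⟨hρ₁, hρ₂⟩
    refine Prod.ext (funext fun x => ?_) (funext fun x => ?_)
    · exact hρ₁.2.1.apply_mul_mul_apply_mul hρ₂.2.1 hρ₂.1.1 he₁ he₁' x
    · exact (mul_comm _ _).trans (hρ₂.2.1.apply_mul_mul_apply_mul hρ₁.2.1 hρ₁.1.1 he₂ he₂' x)
  · intro σ hσ
    funext x
    simp only [← hσ.1.2, ← add_mul, add_comm e₁, he, one_mul]

end Characters

section AdditiveCharacter

variable {K : Type*} [Field K] [NumberField K] {n : ℕ}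

theorem psiK_add (x y : K) : psiK K (x + y) = psiK K x * psiK K y := by
  rw [psiK, psiK, psiK, map_add, ← Complex.exp_add]
  push_cast
  ring_nf

theorem psiK_eq_one_of_trace_eq_intCast {x : K} {k : ℤ} (h : Algebra.trace ℚ K x = k) :
    psiK K x = 1 := by
  rw [psiK, h, mul_comm]
  push_cast
  exact Complex.exp_int_mul_two_pi_mul_I k

theorem psiK_sum_mul_eq_of_sub_mem {L : Ideal (𝓞 K)} {m : Fin n → K}
    (hm : ∀ i, ∀ z ∈ L, ∃ k : ℤ, Algebra.trace ℚ K (m i * (z : K)) = (k : ℚ))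
    {a a' : Fin n → 𝓞 K} (h : ∀ i, a i - a' i ∈ L) :
    psiK K (∑ i, m i * (a i : K)) = psiK K (∑ i, m i * (a' i : K)) := by
  choose k hk using fun i => hm i _ (h i)
  have hsum : ∑ i, m i * (a i : K) =
      ∑ i, m i * (a' i : K) + ∑ i, m i * ((a i - a' i : 𝓞 K) : K) := by
    rw [← Finset.sum_add_distrib]
    push_cast
    ring_nf
  have htr : Algebra.trace ℚ K (∑ i, m i * ((a i - a' i : 𝓞 K) : K)) =
      ((∑ i, k i : ℤ) : ℚ) := by
    rw [map_sum, Int.cast_sum]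
    exact Finset.sum_congr rfl fun i _ => hk i
  rw [hsum, psiK_add, psiK_eq_one_of_trace_eq_intCast htr, mul_one]

theorem psiK_sum_mul_smul_add_smul (m : Fin n → K) (p q : ℕ) (x y : Fin n → 𝓞 K) :
    psiK K (∑ i, m i * (((p : 𝓞 K) • x + (q : 𝓞 K) • y) i : K)) =
      psiK K (∑ i, (p : K) * m i * (x i : K)) * psiK K (∑ i, (q : K) * m i * (y i : K)) := by
  rw [← psiK_add, ← Finset.sum_add_distrib]
  congr 1
  refine Finset.sum_congr rfl fun i _ => ?_
  simp only [Pi.add_apply, Pi.smul_apply, smul_eq_mul, map_add, map_mul, map_natCast]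
  ring

end AdditiveCharacter

section ExpSum

variable {K : Type*} [Field K] [NumberField K] {n : ℕ}

noncomputable def expSumTerm (c : Fin n → Fin n → (K ≃ₐ[ℚ] K) → (K ≃ₐ[ℚ] K) → 𝓞 K)
    (σ : 𝓞 K → ℂ) (N : 𝓞 K) (m : Fin n → K) (a : Fin n → 𝓞 K) : ℂ :=
  σ (gqf c a - N) * psiK K (∑ i, m i * (a i : K))

variable {c : Fin n → Fin n → (K ≃ₐ[ℚ] K) → (K ≃ₐ[ℚ] K) → 𝓞 K}

theorem IsCharModI.apply_mul_gqf_smul_add_smul_sub {𝔟 : Ideal (𝓞 K)} {σ : 𝓞 K → ℂ}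
    (hσ : IsCharModI 𝔟 σ) {p q : ℕ} (hq : (q : 𝓞 K) ∈ 𝔟) {w : 𝓞 K} (hw : w * p ^ 2 - 1 ∈ 𝔟)
    (x y : Fin n → 𝓞 K) (N : 𝓞 K) :
    σ (w * (gqf c ((p : 𝓞 K) • x + (q : 𝓞 K) • y) - N)) = σ (gqf c x - w * N) := by
  refine hσ.eq_of_sub_mem ?_
  rw [show w * (gqf c ((p : 𝓞 K) • x + (q : 𝓞 K) • y) - N) - (gqf c x - w * N) =
      w * (gqf c ((p : 𝓞 K) • x + (q : 𝓞 K) • y) - (p : 𝓞 K) ^ 2 * gqf c x) +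
        (w * p ^ 2 - 1) * gqf c x by ring]
  exact add_mem (𝔟.mul_mem_left w (gqf_smul_add_smul_sub_mem p hq x y)) (𝔟.mul_mem_right _ hw)

theorem expSumTerm_eq_of_sub_mem {G : Set (K ≃ₐ[ℚ] K)}
    (hG : ∀ i j τ τ', c i j τ τ' ≠ 0 → τ ∈ G ∧ τ' ∈ G) {𝔟 : Ideal (𝓞 K)} {σ : 𝓞 K → ℂ}
    (hσ : IsCharModI 𝔟 σ) (N : 𝓞 K) {m : Fin n → K}
    (hm : ∀ i, ∀ z ∈ GIdeal G 𝔟, ∃ k : ℤ, Algebra.trace ℚ K (m i * (z : K)) = (k : ℚ))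
    {a a' : Fin n → 𝓞 K} (h : ∀ i, a i - a' i ∈ GIdeal G 𝔟) :
    expSumTerm c σ N m a = expSumTerm c σ N m a' :=
  congr_arg₂ (· * ·)
    (hσ.eq_of_sub_mem (by rw [sub_sub_sub_cancel_right]; exact gqf_sub_gqf_mem hG h))
    (psiK_sum_mul_eq_of_sub_mem hm h)

theorem expSumTerm_smul_add_smul {𝔟₁ 𝔟₂ : Ideal (𝓞 K)} {σ₁ σ₂ : 𝓞 K → ℂ}
    (hσ₁ : IsCharModI 𝔟₁ σ₁) (hσ₂ : IsCharModI 𝔟₂ σ₂) {q₁ q₂ : ℕ} (hq₁ : (q₁ : 𝓞 K) ∈ 𝔟₁)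
    (hq₂ : (q₂ : 𝓞 K) ∈ 𝔟₂) {w₁ w₂ : 𝓞 K} (hw₁ : w₁ * q₂ ^ 2 - 1 ∈ 𝔟₁)
    (hw₂ : w₂ * q₁ ^ 2 - 1 ∈ 𝔟₂) (N : 𝓞 K) (m : Fin n → K) (a₁ a₂ : Fin n → 𝓞 K) :
    expSumTerm c (fun x => σ₁ (w₁ * x) * σ₂ (w₂ * x)) N m
        ((q₂ : 𝓞 K) • a₁ + (q₁ : 𝓞 K) • a₂) =
      expSumTerm c σ₁ (w₁ * N) (fun i => (q₂ : K) * m i) a₁ *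
        expSumTerm c σ₂ (w₂ * N) (fun i => (q₁ : K) * m i) a₂ := by
  simp only [expSumTerm]
  rw [hσ₁.apply_mul_gqf_smul_add_smul_sub hq₁ hw₁, add_comm,
    hσ₂.apply_mul_gqf_smul_add_smul_sub hq₂ hw₂, add_comm, psiK_sum_mul_smul_add_smul]
  ring

end ExpSum

theorem expSum_twisted_multiplicative_general
    (K : Type*) [Field K] [NumberField K] (n : ℕ)
    (c : Fin n → Fin n → (K ≃ₐ[ℚ] K) → (K ≃ₐ[ℚ] K) → 𝓞 K)
    (G : Set (K ≃ₐ[ℚ] K))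
    (hG : ∀ i j τ τ', c i j τ τ' ≠ 0 → τ ∈ G ∧ τ' ∈ G)
    (𝔟 𝔟₁ 𝔟₂ : Ideal (𝓞 K)) (h𝔟 : 𝔟 = 𝔟₁ * 𝔟₂) (hb : 𝔟 ≠ ⊥)
    (hcop : Nat.Coprime (Ideal.absNorm 𝔟₁) (Ideal.absNorm 𝔟₂))
    (b₁inv b₂inv : 𝓞 K)
    (hb₂inv : (Ideal.absNorm 𝔟₂ : 𝓞 K) * b₂inv - 1 ∈ 𝔟₁)
    (hb₁inv : (Ideal.absNorm 𝔟₁ : 𝓞 K) * b₁inv - 1 ∈ 𝔟₂)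
    (R R₁ R₂ : Finset (Fin n → 𝓞 K))
    (hR : ∀ x : Fin n → 𝓞 K, ∃! r, r ∈ R ∧ ∀ i, x i - r i ∈ GIdeal G 𝔟)
    (hR₁ : ∀ x : Fin n → 𝓞 K, ∃! r, r ∈ R₁ ∧ ∀ i, x i - r i ∈ GIdeal G 𝔟₁)
    (hR₂ : ∀ x : Fin n → 𝓞 K, ∃! r, r ∈ R₂ ∧ ∀ i, x i - r i ∈ GIdeal G 𝔟₂)
    (N : 𝓞 K) (m : Fin n → K)
    (hm : ∀ i, ∀ z ∈ GIdeal G 𝔟, ∃ k : ℤ,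
      Algebra.trace ℚ K (m i * (z : K)) = (k : ℚ)) :
    expSum c 𝔟 R N m =
      expSum c 𝔟₁ R₁ (b₂inv ^ 2 * N)
          (fun i => ((Ideal.absNorm 𝔟₂ : ℕ) : K) * m i) *
        expSum c 𝔟₂ R₂ (b₁inv ^ 2 * N)
          (fun i => ((Ideal.absNorm 𝔟₁ : ℕ) : K) * m i) := by
  subst h𝔟
  have hq₁ := Ideal.absNorm_mem 𝔟₁
  have hq₂ := Ideal.absNorm_mem 𝔟₂
  have hq : IsCoprime ((Ideal.absNorm 𝔟₁ : ℕ) : 𝓞 K) (Ideal.absNorm 𝔟₂ : 𝓞 K) := by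
    exact_mod_cast (Nat.isCoprime_iff_coprime.2 hcop).intCast
  have hw₁ := sq_mul_sq_sub_one_mem hb₂inv
  have hw₂ := sq_mul_sq_sub_one_mem hb₁inv
  have hΦ := (bijOn_mul_primChars (((Ideal.isCoprime_span_singleton_iff _ _).2 hq).mono
      (Ideal.dvd_span_singleton.2 hq₁) (Ideal.dvd_span_singleton.2 hq₂)) hb).comp
    ((bijOn_mul_left_primChars hw₁).prodMap (bijOn_mul_left_primChars hw₂))
  calc expSum c (𝔟₁ * 𝔟₂) R N m
      = ∑ᶠ p ∈ PrimChars K 𝔟₁ ×ˢ PrimChars K 𝔟₂, ∑ a ∈ R,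
          expSumTerm c (fun x => p.1 (b₂inv ^ 2 * x) * p.2 (b₁inv ^ 2 * x)) N m a :=
        (finsum_mem_eq_of_bijOn _ hΦ fun _ _ => rfl).symm
    _ = ∑ᶠ p ∈ PrimChars K 𝔟₁ ×ˢ PrimChars K 𝔟₂, ∑ a ∈ R₁ ×ˢ R₂,
          expSumTerm c (fun x => p.1 (b₂inv ^ 2 * x) * p.2 (b₁inv ^ 2 * x)) N m
            ((Ideal.absNorm 𝔟₂ : 𝓞 K) • a.1 + (Ideal.absNorm 𝔟₁ : 𝓞 K) • a.2) :=
        finsum_mem_congr rfl fun p hp => IsTransversal.sum_eq_sum_product hR hR₁ hR₂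
          (GIdeal_mono Ideal.mul_le_left) (GIdeal_mono Ideal.mul_le_right) (GIdeal_mul_le _ _)
          (natCast_mem_GIdeal hq₁) (natCast_mem_GIdeal hq₂) hq _
          fun _ _ => expSumTerm_eq_of_sub_mem hG (hΦ.mapsTo hp).2.1 N hm
    _ = ∑ᶠ p ∈ PrimChars K 𝔟₁ ×ˢ PrimChars K 𝔟₂,
          (∑ a ∈ R₁, expSumTerm c p.1 (b₂inv ^ 2 * N) (fun i => (Ideal.absNorm 𝔟₂ : K) * m i) a) *
            ∑ a ∈ R₂, expSumTerm c p.2 (b₁inv ^ 2 * N) (fun i => (Ideal.absNorm 𝔟₁ : K) * m i) a :=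
        finsum_mem_congr rfl fun p hp => by
          rw [Finset.sum_mul_sum, Finset.sum_product]
          exact Finset.sum_congr rfl fun a₁ _ => Finset.sum_congr rfl fun a₂ _ =>
            expSumTerm_smul_add_smul hp.1.2.1 hp.2.2.1 hq₁ hq₂ hw₁ hw₂ N m a₁ a₂
    _ = _ := by
      unfold expSum
      rw [finsum_mem_mul_finsum_mem]
      rfl

/-- (Twisted multiplicativity.)  Let `𝔟 = 𝔟₁ 𝔟₂` with
`gcd(N𝔟₁, N𝔟₂) = 1`.  Then for any `N ∈ 𝓞` and any `m` in the dual of `ᴳ𝔟`,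
`S_𝔟(N; m) = S_{𝔟₁}(\bar{N𝔟₂}² N; (N𝔟₂) m) · S_{𝔟₂}(\bar{N𝔟₁}² N; (N𝔟₁) m)`,
where `\bar{N𝔟₂}` is a multiplicative inverse of `N𝔟₂` modulo `𝔟₁` and vice
versa. -/
theorem expSum_twisted_multiplicative
    (K : Type*) [Field K] [NumberField K] [IsGalois ℚ K] (n : ℕ)
    (c : Fin n → Fin n → (K ≃ₐ[ℚ] K) → (K ≃ₐ[ℚ] K) → 𝓞 K)
    (hsym : ∀ i j τ τ', c i j τ τ' = c j i τ' τ)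
    (G : Set (K ≃ₐ[ℚ] K))
    (hG : ∀ i j τ τ', c i j τ τ' ≠ 0 → τ ∈ G ∧ τ' ∈ G)
    (𝔟 𝔟₁ 𝔟₂ : Ideal (𝓞 K)) (h𝔟 : 𝔟 = 𝔟₁ * 𝔟₂) (hb : 𝔟 ≠ ⊥)
    (hcop : Nat.Coprime (Ideal.absNorm 𝔟₁) (Ideal.absNorm 𝔟₂))
    (b₁inv b₂inv : 𝓞 K)
    (hb₂inv : (Ideal.absNorm 𝔟₂ : 𝓞 K) * b₂inv - 1 ∈ 𝔟₁)
    (hb₁inv : (Ideal.absNorm 𝔟₁ : 𝓞 K) * b₁inv - 1 ∈ 𝔟₂)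
    (R R₁ R₂ : Finset (Fin n → 𝓞 K))
    (hR : ∀ x : Fin n → 𝓞 K, ∃! r, r ∈ R ∧ ∀ i, x i - r i ∈ GIdeal G 𝔟)
    (hR₁ : ∀ x : Fin n → 𝓞 K, ∃! r, r ∈ R₁ ∧ ∀ i, x i - r i ∈ GIdeal G 𝔟₁)
    (hR₂ : ∀ x : Fin n → 𝓞 K, ∃! r, r ∈ R₂ ∧ ∀ i, x i - r i ∈ GIdeal G 𝔟₂)
    (N : 𝓞 K) (m : Fin n → K)
    (hm : ∀ i, ∀ z ∈ GIdeal G 𝔟, ∃ k : ℤ,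
      Algebra.trace ℚ K (m i * (z : K)) = (k : ℚ)) :
    expSum c 𝔟 R N m =
      expSum c 𝔟₁ R₁ (b₂inv ^ 2 * N)
          (fun i => ((Ideal.absNorm 𝔟₂ : ℕ) : K) * m i) *
        expSum c 𝔟₂ R₂ (b₁inv ^ 2 * N)
          (fun i => ((Ideal.absNorm 𝔟₁ : ℕ) : K) * m i) :=
  expSum_twisted_multiplicative_general K n c G hG 𝔟 𝔟₁ 𝔟₂ h𝔟 hb hcop b₁inv b₂inv hb₂inv hb₁inv R R₁
    R₂ hR hR₁ hR₂ N m hm
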